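/- Suppose S(g,σ) = 1 on an open set where σ > 0. If u is a smooth function with Δ_{σ^{-2}g} u = -μ(n-μ) u, then for every λ: L(g,σ;λ+1)(σ^{λ+1} u) = (λ+μ+1)(λ-μ+n+1) σ^λ u. -/

import Mathlib

/-!
Expanding `L(λ)(σ^λ v)` with the Leibniz and chain rules and `Δσ = -(n+1)ρ - σJ`, the
`|dσ|²` terms and the `ρ` terms combine into `λ(n+λ) σ^{λ-1} S(g,σ) v`, which is the
conjugation identity `L(λ)(σ^λ v) = -σ^{λ-1} (Δ_{σ^{-2}g} v - λ(n+λ) S v)`. For `S = 1`,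
`λ ↦ λ+1` and an eigenfunction `u`, the right side becomes `(μ(n-μ) + (λ+1)(n+λ+1)) σ^λ u`,
and `μ(n-μ) + (λ+1)(n+λ+1) = (λ+μ+1)(λ-μ+n+1)`.
-/

/-- Abstract calculus on a commutative `ℂ`-algebra `A` of (complex-valued smooth) functions on a
Riemannian manifold `(X,g)` of dimension `n+1`, together with a positive function `σ` and its
complex powers `pow a = σ^a`:
* `lap` is the Laplacian `Δ_g`, `grad u v = ⟨grad_g u, grad_g v⟩_g` the gradient pairing;
* both satisfy the usual Leibniz rules, and the powers `σ^a` obey the chain rules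
  `⟨grad σ^a, grad u⟩ = a σ^{a-1} ⟨grad σ, grad u⟩` and
  `Δ(σ^a) = a σ^{a-1} Δσ + a(a-1) σ^{a-2} |grad σ|²`. -/
structure ConformalCalculus (A : Type*) [CommRing A] [Algebra ℂ A] where
  lap : A →ₗ[ℂ] A
  grad : A →ₗ[ℂ] A →ₗ[ℂ] A
  grad_symm : ∀ u v, grad u v = grad v u
  grad_leibniz : ∀ u v w, grad (u * v) w = u * grad v w + v * grad u w
  lap_leibniz : ∀ u v, lap (u * v) = u * lap v + v * lap u + 2 * grad u v
  pow : ℂ → A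
  pow_zero' : pow 0 = 1
  pow_add' : ∀ a b : ℂ, pow (a + b) = pow a * pow b
  grad_pow : ∀ (a : ℂ) (u : A), grad (pow a) u = a • (pow (a - 1) * grad (pow 1) u)
  lap_pow : ∀ a : ℂ, lap (pow a)
    = a • (pow (a - 1) * lap (pow 1)) + (a * (a - 1)) • (pow (a - 2) * grad (pow 1) (pow 1))

namespace ConformalCalculus

variable {A : Type*} [CommRing A] [Algebra ℂ A]

/-- The defining function `σ`. -/
def σ (d : ConformalCalculus A) : A := d.pow 1

/-- `(n+1) ρ = -Δ_g σ - σ J`, where `2nJ = scal(g)`. -/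
noncomputable def ρ (n : ℕ) (d : ConformalCalculus A) (J : A) : A :=
  (-(((n : ℂ) + 1)⁻¹)) • (d.lap d.σ + d.σ * J)

/-- `S(g,σ) = |dσ|_g² + 2σρ`. -/
noncomputable def S (n : ℕ) (d : ConformalCalculus A) (J : A) : A :=
  d.grad d.σ d.σ + 2 * d.σ * d.ρ n J

/-- The Laplace–Robin operator
`L(g,σ;λ)u = (n+2λ-1)(⟨grad σ, grad u⟩ + λρu) - σ(Δ_g u + λJu)`. -/
noncomputable def L (n : ℕ) (d : ConformalCalculus A) (J : A) (lam : ℂ) (u : A) : A :=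
  ((n : ℂ) + 2 * lam - 1) • (d.grad d.σ u + lam • (d.ρ n J * u))
    - d.σ * (d.lap u + lam • (J * u))

/-- The Laplacian of the conformally rescaled metric `σ^{-2}g`:
`Δ_{σ^{-2}g} u = σ² Δ_g u - (n-1) σ ⟨grad σ, grad u⟩`. -/
noncomputable def lapConf (n : ℕ) (d : ConformalCalculus A) (u : A) : A :=
  d.σ ^ 2 * d.lap u - ((n : ℂ) - 1) • (d.σ * d.grad d.σ u)

end ConformalCalculus

namespace ConformalCalculus

variable {A : Type*} [CommRing A] [Algebra ℂ A] (d : ConformalCalculus A)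

theorem pow_eq_pow_sub_one_mul_σ (a : ℂ) : d.pow a = d.pow (a - 1) * d.σ := by
  rw [σ, ← d.pow_add', sub_add_cancel]

theorem lap_σ (n : ℕ) (J : A) : d.lap d.σ = (-((n : ℂ) + 1)) • d.ρ n J - d.σ * J := by
  have hn : (n : ℂ) + 1 ≠ 0 := Nat.cast_add_one_ne_zero n
  rw [ρ, smul_smul, neg_mul_neg, mul_inv_cancel₀ hn, one_smul, add_sub_cancel_right]

theorem grad_σ_pow_mul (a : ℂ) (v : A) :
    d.grad d.σ (d.pow a * v)
      = d.pow a * d.grad d.σ v + a • (d.pow (a - 1) * d.grad d.σ d.σ * v) := by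
  rw [d.grad_symm, d.grad_leibniz, d.grad_symm v, d.grad_pow a, ← σ, mul_smul_comm, mul_comm v]

theorem lap_pow_mul (a : ℂ) (v : A) :
    d.lap (d.pow a * v) = d.pow a * d.lap v + a • (d.pow (a - 1) * d.lap d.σ * v)
      + (a * (a - 1)) • (d.pow (a - 2) * d.grad d.σ d.σ * v)
      + (2 * a) • (d.pow (a - 1) * d.grad d.σ v) := by
  rw [d.lap_leibniz, d.lap_pow, d.grad_pow a, ← σ]
  simp only [Algebra.smul_def, map_mul, map_sub, map_one, map_ofNat]
  ring

theorem L_pow_mul (n : ℕ) (J : A) (a : ℂ) (v : A) :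
    d.L n J a (d.pow a * v)
      = -(d.pow (a - 1) * (d.lapConf n v - (a * (n + a)) • (d.S n J * v))) := by
  rw [L, grad_σ_pow_mul, lap_pow_mul, lap_σ _ n J, S, lapConf, d.pow_eq_pow_sub_one_mul_σ a,
    d.pow_eq_pow_sub_one_mul_σ (a - 1), show a - 1 - 1 = a - 2 by ring]
  simp only [Algebra.smul_def, map_add, map_mul, map_sub, map_neg, map_one, map_ofNat, map_natCast]
  ring

end ConformalCalculus

open ConformalCalculus

/-- **Bernstein–Sato functional equation.** Suppose `S(g,σ) = 1` on an open set
where `σ > 0`.  If `u` is a smooth function with `Δ_{σ^{-2}g} u = -μ(n-μ) u`, then for every `λ`: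
`L(g,σ;λ+1)(σ^{λ+1} u) = (λ+μ+1)(λ-μ+n+1) σ^λ u`. -/
theorem bernstein_sato_functional_equation {A : Type*} [CommRing A] [Algebra ℂ A]
    (n : ℕ) (d : ConformalCalculus A) (J : A) (hS : d.S n J = 1)
    (μ : ℂ) (u : A) (hu : d.lapConf n u = (-(μ * ((n : ℂ) - μ))) • u) (lam : ℂ) :
    d.L n J (lam + 1) (d.pow (lam + 1) * u)
      = ((lam + μ + 1) * (lam - μ + (n : ℂ) + 1)) • (d.pow lam * u) := by
  calc d.L n J (lam + 1) (d.pow (lam + 1) * u)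
      = -(d.pow lam * (d.lapConf n u - ((lam + 1) * (n + (lam + 1))) • u)) := by
        rw [L_pow_mul, hS, one_mul, add_sub_cancel_right]
    _ = ((lam + μ + 1) * (lam - μ + (n : ℂ) + 1)) • (d.pow lam * u) := by
        rw [hu, ← sub_smul, mul_smul_comm, ← neg_smul]
        congr 1
        ring
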